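/- Let $a, b, c$ be natural numbers. Then $$\sum_{k=-\min\{a,b,c\}}^{\min\{a,b,c\}} (-1)^k \binom{a+b}{a+k}\binom{b+c}{b+k}\binom{c+a}{c+k} \;=\; \frac{(a+b+c)!}{a!\,b!\,c!},$$ where the sum is over all integers $k$ with $-\min\{a,b,c\} \le k \le \min\{a,b,c\}$ (equivalently over all integers, since the binomial coefficients vanish outside this range). -/

import Mathlib

/-!
Both sides satisfy the recurrence
`F(a+1, b+1, c+1) = F(a, b+1, c+1) + F(a+1, b, c+1) + F(a+1, b+1, c)`
and agree when one of `a, b, c` vanishes, where the sum has the single term `k = 0`.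
For the trinomial coefficient `(a+b+c)! / (a! b! c!)` this is, after clearing factorials,
`a+b+c+3 = (a+1) + (b+1) + (c+1)`.
For the sum it holds termwise up to a difference `G(k) - G(k+1)`, with the Wilf–Zeilberger
certificate `G(k) = (-1)^k C(a+b+1, a+k) C(b+c+1, b+k) C(c+a+1, c+k)`, which telescopes away
because `G` vanishes far from the origin.
-/

open Finset Nat

def intChoose (n : ℕ) (k : ℤ) : ℕ :=
  if 0 ≤ k then n.choose k.toNat else 0

lemma intChoose_of_nonneg {n : ℕ} {k : ℤ} (hk : 0 ≤ k) : intChoose n k = n.choose k.toNat :=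
  if_pos hk

lemma intChoose_of_neg {n : ℕ} {k : ℤ} (hk : k < 0) : intChoose n k = 0 :=
  if_neg hk.not_ge

lemma intChoose_of_lt {n : ℕ} {k : ℤ} (hk : n < k) : intChoose n k = 0 := by
  rw [intChoose_of_nonneg (by omega), choose_eq_zero_of_lt (by omega)]

lemma intChoose_succ_succ (n : ℕ) (k : ℤ) :
    intChoose (n + 1) (k + 1) = intChoose n (k + 1) + intChoose n k := by
  rcases lt_or_ge k 0 with hk | hk
  · rw [intChoose_of_neg hk]
    rcases (by omega : k + 1 < 0 ∨ k + 1 = 0) with hk' | hk'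
    · rw [intChoose_of_neg hk', intChoose_of_neg hk']
    · simp [hk', intChoose_of_nonneg]
  · rw [intChoose_of_nonneg hk, intChoose_of_nonneg (by omega), intChoose_of_nonneg (by omega),
      show (k + 1).toNat = k.toNat + 1 by omega, choose_succ_succ, add_comm]

lemma intChoose_add_eq_zero {m n : ℕ} {k : ℤ} (hk : k < -m ∨ n < k) :
    intChoose (m + n) (m + k) = 0 := by
  rcases hk with hk | hk
  · exact intChoose_of_neg (by omega)
  · exact intChoose_of_lt (by push_cast; omega)

def dixonTerm (a b c : ℕ) (k : ℤ) : ℚ :=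
  (-1) ^ k * intChoose (a + b) (a + k) * intChoose (b + c) (b + k) * intChoose (c + a) (c + k)

noncomputable def dixonSum (a b c : ℕ) : ℚ :=
  ∑ k ∈ Icc (-(min a (min b c) : ℤ)) (min a (min b c) : ℤ), dixonTerm a b c k

def dixonCert (a b c : ℕ) (k : ℤ) : ℚ :=
  (-1) ^ k * intChoose (a + b + 1) (a + k) * intChoose (b + c + 1) (b + k) *
    intChoose (c + a + 1) (c + k)

lemma dixonTerm_eq_zero {a b c : ℕ} {k : ℤ}
    (hk : k ∉ Icc (-(min a (min b c) : ℤ)) (min a (min b c) : ℤ)) : dixonTerm a b c k = 0 := by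
  rw [mem_Icc] at hk
  rcases (by omega : (k < -a ∨ b < k) ∨ (k < -b ∨ c < k) ∨ (k < -c ∨ a < k)) with h | h | h <;>
    simp [dixonTerm, intChoose_add_eq_zero h]

lemma sum_dixonTerm_of_subset {a b c : ℕ} {s : Finset ℤ}
    (hs : Icc (-(min a (min b c) : ℤ)) (min a (min b c) : ℤ) ⊆ s) :
    ∑ k ∈ s, dixonTerm a b c k = dixonSum a b c :=
  (sum_subset hs fun _ _ hk ↦ dixonTerm_eq_zero hk).symm

lemma dixonTerm_sub_eq_dixonCert_sub (a b c : ℕ) (k : ℤ) :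
    dixonTerm (a + 1) (b + 1) (c + 1) k - dixonTerm a (b + 1) (c + 1) k
      - dixonTerm (a + 1) b (c + 1) k - dixonTerm (a + 1) (b + 1) c k
      = dixonCert a b c k - dixonCert a b c (k + 1) := by
  -- bring every index into the shape `(n + 1, j + 1)` of Pascal's rule
  simp only [dixonTerm, dixonCert, Nat.cast_add, Nat.cast_one, ← add_assoc,
    add_right_comm _ (1 : ℕ), add_right_comm _ (1 : ℤ), intChoose_succ_succ, zpow_add_one₀ (by norm_num : (-1 : ℚ) ≠ 0)]
  ring

lemma dixonSum_succ_succ_succ (a b c : ℕ) :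
    dixonSum (a + 1) (b + 1) (c + 1) =
      dixonSum a (b + 1) (c + 1) + dixonSum (a + 1) b (c + 1) + dixonSum (a + 1) (b + 1) c := by
  set N := a + b + c + 2
  have hsub (a' b' c' : ℕ) (h : a' ≤ a + 1) :
      Icc (-(min a' (min b' c') : ℤ)) (min a' (min b' c') : ℤ) ⊆ Ico (-N : ℤ) N :=
    (Icc_subset_Ico_iff (by omega)).2 ⟨by omega, by omega⟩
  have hcert : ∑ k ∈ Ico (-N : ℤ) N, (dixonCert a b c k - dixonCert a b c (k + 1)) = 0 := by
    rw [sum_Ico_int_sub]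
    simp [dixonCert, intChoose_of_neg (by omega : (a : ℤ) + -N < 0),
      intChoose_of_lt (by push_cast; omega : ((a + b + 1 : ℕ) : ℤ) < a + N)]
  simp only [← dixonTerm_sub_eq_dixonCert_sub, sum_sub_distrib,
    sum_dixonTerm_of_subset (hsub _ _ _ le_rfl),
    sum_dixonTerm_of_subset (hsub a _ _ (by omega))] at hcert
  linarith

def trinomial (a b c : ℕ) : ℚ := (a + b + c)! / (a ! * b ! * c !)

lemma trinomial_succ_succ_succ (a b c : ℕ) :
    trinomial (a + 1) (b + 1) (c + 1) =
      trinomial a (b + 1) (c + 1) + trinomial (a + 1) b (c + 1) + trinomial (a + 1) (b + 1) c := by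
  simp only [trinomial, show a + 1 + (b + 1) + (c + 1) = a + b + c + 2 + 1 by omega,
    show a + (b + 1) + (c + 1) = a + b + c + 2 by omega,
    show a + 1 + b + (c + 1) = a + b + c + 2 by omega,
    show a + 1 + (b + 1) + c = a + b + c + 2 by omega, factorial_succ]
  push_cast
  field_simp
  ring

lemma dixonSum_eq_trinomial_of_eq_zero {a b c : ℕ} (h : a = 0 ∨ b = 0 ∨ c = 0) :
    dixonSum a b c = trinomial a b c := by
  have hmin : (min a (min b c) : ℤ) = 0 := by omega
  rw [dixonSum, hmin, neg_zero, Icc_self, sum_singleton]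
  rcases h with rfl | rfl | rfl <;>
    simp [dixonTerm, trinomial, intChoose_of_nonneg, cast_choose, add_comm, mul_comm]

theorem dixonSum_eq_trinomial : ∀ a b c : ℕ, dixonSum a b c = trinomial a b c
  | 0, _, _ | _ + 1, 0, _ | _ + 1, _ + 1, 0 => dixonSum_eq_trinomial_of_eq_zero (by simp)
  | a + 1, b + 1, c + 1 => by
    rw [dixonSum_succ_succ_succ, trinomial_succ_succ_succ, dixonSum_eq_trinomial a,
      dixonSum_eq_trinomial (a + 1) b, dixonSum_eq_trinomial (a + 1) (b + 1) c]
termination_by a b c => a + b + c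

/-- **Dixon's theorem** in its classical binomial form: for natural numbers
`a, b, c`,
`∑_{k=-min{a,b,c}}^{min{a,b,c}} (-1)^k C(a+b, a+k) C(b+c, b+k) C(c+a, c+k)
  = (a+b+c)! / (a! b! c!)`. -/
theorem dixon_summation (a b c : ℕ) :
    ∑ k ∈ Finset.Icc (-(min a (min b c) : ℤ)) ((min a (min b c) : ℤ)),
      (-1 : ℚ) ^ k *
        (((a + b).choose ((a : ℤ) + k).toNat : ℚ)) *
        (((b + c).choose ((b : ℤ) + k).toNat : ℚ)) *
        (((c + a).choose ((c : ℤ) + k).toNat : ℚ)) =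
    ((a + b + c).factorial : ℚ) /
      ((a.factorial : ℚ) * (b.factorial : ℚ) * (c.factorial : ℚ)) := by
  rw [← trinomial, ← dixonSum_eq_trinomial, dixonSum]
  refine sum_congr rfl fun k hk ↦ ?_
  rw [mem_Icc] at hk
  rw [dixonTerm, intChoose_of_nonneg (by omega), intChoose_of_nonneg (by omega),
    intChoose_of_nonneg (by omega)]
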